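/- (Reconstruction of the ideal lattice.) Let D be a distributive lattice with ⊤ and ⊥. The assignments I ↦ K_I := {x ∈ Spec D | I ≤ x} and K ↦ I_K := {p : D | ∀ x ∈ K, p ∈ x} define mutually inverse, inclusion-reversing bijections between the ideals of D (Order.Ideal D) and the subsets of Spec D that are ultraproduct-closed and up-closed. In particular: K_I is ultraproduct-closed and up-closed for every ideal I; I_K is an ideal for every K; I_{K_I} = I for every ideal I; K_{I_K} = K for every ultraproduct-closed up-closed K; and I ≤ J ↔ K_J ⊆ K_I. -/

import Mathlib

universe u v

/-- The set of prime ideals of a bounded distributive lattice `D`. -/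
def Spec (D : Type u) [DistribLattice D] [BoundedOrder D] : Set (Order.Ideal D) :=
  {x | x.IsPrime}

/-- `K` is ultraproduct-closed: whenever `f` is a family of ideals valued in
`K` and `J` is the ultraproduct of `f` along the ultrafilter `μ`
(characterised by `p ∈ J ↔ {s | p ∈ f s} ∈ μ`), then `J` belongs to `K`. -/
def UltraClosed (D : Type u) [DistribLattice D] [BoundedOrder D]
    (K : Set (Order.Ideal D)) : Prop :=
  ∀ (S : Type u) (f : S → Order.Ideal D) (μ : Ultrafilter S) (J : Order.Ideal D),
    (∀ s, f s ∈ K) → (∀ p : D, p ∈ J ↔ {s | p ∈ f s} ∈ μ) → J ∈ K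

/-- `K` is up-closed in `Spec D`. -/
def UpClosed (D : Type u) [DistribLattice D] [BoundedOrder D]
    (K : Set (Order.Ideal D)) : Prop :=
  ∀ x ∈ K, ∀ y ∈ Spec D, x ≤ y → y ∈ K

/-- `K` is down-closed in `Spec D`. -/
def DownClosed (D : Type u) [DistribLattice D] [BoundedOrder D]
    (K : Set (Order.Ideal D)) : Prop :=
  ∀ x ∈ K, ∀ y ∈ Spec D, y ≤ x → y ∈ K

/-- `K_I`: the set of prime ideals containing the ideal `I`. -/
def specK {D : Type u} [DistribLattice D] [BoundedOrder D]
    (I : Order.Ideal D) : Set (Order.Ideal D) :=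
  {x | x ∈ Spec D ∧ I ≤ x}

/-- `I_K`: the set of elements of `D` belonging to every member of `K`. -/
def idealOf {D : Type u} [DistribLattice D] [BoundedOrder D]
    (K : Set (Order.Ideal D)) : Set D :=
  {p | ∀ x ∈ K, p ∈ x}


/-! Every ideal is the intersection of the prime ideals containing it (prime ideal theorem),
which gives `I_{K_I} = I` and the order reversal. For `K_{I_K} = K`, let `x` be a prime ideal
containing `⋂ K`. For each finite `B ⊆ D`, the meet of the elements of `B` outside `x` lies outside
the prime `x`, hence outside some `f B ∈ K`. Along an ultrafilter refining `atTop` on `Finset D`,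
every `p ∉ x` eventually lies in `B`, so `p` is outside the ultraproduct `⟨f, μ⟩`; thus
`⟨f, μ⟩ ≤ x`, and `x ∈ K` by ultraproduct- and up-closure. -/

namespace Order.Ideal

section SemilatticeSup

variable {D S : Type*} [SemilatticeSup D] [OrderBot D]

def ultraproduct (f : S → Ideal D) (μ : Ultrafilter S) : Ideal D where
  carrier := {p | {s | p ∈ f s} ∈ μ}
  lower' _ _ hba ha := Filter.mem_of_superset ha fun s hs => (f s).lower hba hs
  nonempty' := ⟨⊥, Filter.univ_mem' fun s => (f s).bot_mem⟩
  directed' _ ha _ hb :=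
    ⟨_, Filter.mem_of_superset (Filter.inter_mem ha hb) fun _ hs => sup_mem hs.1 hs.2,
      le_sup_left, le_sup_right⟩

variable {f : S → Ideal D} {μ : Ultrafilter S} {p : D}

@[simp]
theorem mem_ultraproduct : p ∈ ultraproduct f μ ↔ {s | p ∈ f s} ∈ μ :=
  Iff.rfl

theorem le_ultraproduct {I : Ideal D} (hI : ∀ s, I ≤ f s) : I ≤ ultraproduct f μ :=
  fun _ hp => Filter.univ_mem' fun s => hI s hp

end SemilatticeSup

theorem isPrime_ultraproduct {D S : Type*} [Lattice D] [BoundedOrder D] {f : S → Ideal D}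
    (μ : Ultrafilter S) (hf : ∀ s, (f s).IsPrime) : (ultraproduct f μ).IsPrime := by
  have : IsProper (ultraproduct f μ) := isProper_of_notMem (p := ⊤) fun htop => by
    obtain ⟨s, hs⟩ := Ultrafilter.nonempty_of_mem htop
    exact (hf s).top_notMem hs
  refine IsPrime.of_mem_or_mem fun hab => Ultrafilter.union_mem_iff.mp ?_
  exact Filter.mem_of_superset hab fun s hs => (hf s).mem_or_mem hs

end Order.Ideal

open Order.Ideal Filter

section Reconstruction

variable {D : Type u} [DistribLattice D] [BoundedOrder D] {K : Set (Order.Ideal D)}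

theorem coe_sInf_eq_idealOf (K : Set (Order.Ideal D)) :
    ((sInf K : Order.Ideal D) : Set D) = idealOf K := by
  ext
  simp [idealOf]

theorem UltraClosed.ultraproduct_mem (hK : UltraClosed D K) {S : Type u}
    {f : S → Order.Ideal D} (μ : Ultrafilter S) (hf : ∀ s, f s ∈ K) : ultraproduct f μ ∈ K :=
  hK S f μ _ hf fun _ => Iff.rfl

theorem ultraClosed_specK (I : Order.Ideal D) : UltraClosed D (specK I) := by
  intro S f μ J hf hJ
  obtain rfl : J = ultraproduct f μ := SetLike.ext hJ
  exact ⟨isPrime_ultraproduct μ fun s => (hf s).1, le_ultraproduct fun s => (hf s).2⟩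

theorem upClosed_specK (I : Order.Ideal D) : UpClosed D (specK I) :=
  fun _ hx _ hy hxy => ⟨hy, hx.2.trans hxy⟩

theorem sInf_specK (I : Order.Ideal D) : sInf (specK I) = I := by
  refine le_antisymm (fun p hp => ?_) (le_sInf fun _ hx => hx.2)
  by_contra hpI
  have hdisj : Disjoint (Order.PFilter.principal p : Set D) I :=
    Set.disjoint_left.mpr fun _ hq hqI => hpI (I.lower (Order.PFilter.mem_principal.mp hq) hqI)
  obtain ⟨x, hx, hIx, hpx⟩ := DistribLattice.prime_ideal_of_disjoint_filter_ideal hdisj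
  exact Set.disjoint_left.mp hpx (Order.PFilter.mem_principal.mpr le_rfl)
    (mem_sInf.mp hp x ⟨hx, hIx⟩)

theorem specK_subset_specK_iff {I J : Order.Ideal D} : specK J ⊆ specK I ↔ I ≤ J := by
  refine ⟨fun h => ?_, fun h _ hx => ⟨hx.1, h.trans hx.2⟩⟩
  simpa only [sInf_specK] using sInf_le_sInf h

theorem exists_mem_forall_notMem_of_sInf_le {x : Order.Ideal D} (hx : x.IsPrime)
    (hKx : sInf K ≤ x) (B : Finset D) : ∃ y ∈ K, ∀ p ∈ B, p ∉ x → p ∉ y := by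
  classical
  set c := (B.filter (· ∉ x)).inf id
  have hc : c ∉ x := Finset.inf_induction (p := (· ∉ x)) hx.top_notMem
    (fun _ ha _ hb hab => (hx.mem_or_mem hab).elim ha hb) fun _ hb => (Finset.mem_filter.mp hb).2
  obtain ⟨y, hyK, hcy⟩ : ∃ y ∈ K, c ∉ y := by simpa using mt (@hKx c) hc
  exact ⟨y, hyK, fun p hpB hpx hpy =>
    hcy (y.lower (Finset.inf_le (Finset.mem_filter.mpr ⟨hpB, hpx⟩)) hpy)⟩

theorem exists_ultraproduct_le_of_sInf_le {x : Order.Ideal D} (hx : x.IsPrime)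
    (hKx : sInf K ≤ x) :
    ∃ (f : Finset D → Order.Ideal D) (μ : Ultrafilter (Finset D)),
      (∀ B, f B ∈ K) ∧ ultraproduct f μ ≤ x := by
  choose f hfK hf using exists_mem_forall_notMem_of_sInf_le hx hKx
  refine ⟨f, .of atTop, hfK, fun p hp => by_contra fun hpx => ?_⟩
  have hfp : ∀ᶠ B in atTop, p ∉ f B := (eventually_ge_atTop {p}).mono fun B hB =>
    hf B p (Finset.singleton_subset_iff.mp hB) hpx
  exact Ultrafilter.compl_mem_iff_notMem.mp (Ultrafilter.of_le atTop hfp) hp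

theorem specK_sInf (hK : K ⊆ Spec D) (hUC : UltraClosed D K) (hUp : UpClosed D K) :
    specK (sInf K) = K := by
  ext x
  refine ⟨fun ⟨hx, hKx⟩ => ?_, fun hxK => ⟨hK hxK, sInf_le hxK⟩⟩
  obtain ⟨f, μ, hfK, hfx⟩ := exists_ultraproduct_le_of_sInf_le hx hKx
  exact hUp _ (hUC.ultraproduct_mem μ hfK) x hx hfx

end Reconstruction

/-- Reconstruction of the ideal lattice: `I ↦ K_I` and `K ↦ I_K` are mutually
inverse, inclusion-reversing bijections between ideals of `D` and
ultraproduct-closed up-closed subsets of `Spec D`. -/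
theorem ideal_lattice_reconstruction {D : Type u} [DistribLattice D] [BoundedOrder D] :
    (∀ I : Order.Ideal D,
      specK I ⊆ Spec D ∧ UltraClosed D (specK I) ∧ UpClosed D (specK I)) ∧
    (∀ K : Set (Order.Ideal D), K ⊆ Spec D →
      ∃ J : Order.Ideal D, (J : Set D) = idealOf K) ∧
    (∀ I : Order.Ideal D, idealOf (specK I) = (I : Set D)) ∧
    (∀ K : Set (Order.Ideal D), K ⊆ Spec D → UltraClosed D K → UpClosed D K →
      ∀ J : Order.Ideal D, (J : Set D) = idealOf K → specK J = K) ∧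
    (∀ I J : Order.Ideal D, I ≤ J ↔ specK J ⊆ specK I) := by
  refine ⟨fun I => ⟨fun _ hx => hx.1, ultraClosed_specK I, upClosed_specK I⟩,
    fun K _ => ⟨sInf K, coe_sInf_eq_idealOf K⟩,
    fun I => by rw [← coe_sInf_eq_idealOf, sInf_specK], ?_, fun _ _ => specK_subset_specK_iff.symm⟩
  intro K hK hUC hUp J hJ
  obtain rfl : J = sInf K := SetLike.coe_injective (hJ.trans (coe_sInf_eq_idealOf K).symm)
  exact specK_sInf hK hUC hUp
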